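/- arXiv:1212.0515 — 5 statements merged into one kernel-verified Lean document; each statement's English description precedes it below -/
import Mathlib

section
/- Let n ≥ 2 and let A = (a_{ij}) be an n×n matrix of distinct indeterminates over a field of characteristic ≠ 2. For any indices i < k and j < l, the differential operator d_{ij}d_{kl} + d_{il}d_{kj} (the 2×2 permanent of the corresponding submatrix of dual variables) annihilates det(A) under the contraction action of partial derivatives on polynomials. -/
/-! Expanding the determinant over permutations, `∂(i,j) ∂(k,l)` kills the monomial of `τ` unless
`τ j = i` and `τ l = k`, and then leaves the product of the variables in the other columns.
`∂(i,l) ∂(k,j)` leaves exactly the same product from the monomial of `τ * swap j l`, whose sign is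
opposite, so the two sums cancel term by term. -/

open MvPolynomial

/-- The determinant of the generic `n × n` matrix of indeterminates. -/
noncomputable def genericDet (n : ℕ) (K : Type) [Field K] :
    MvPolynomial (Fin n × Fin n) K :=
  Matrix.det (Matrix.of fun i j : Fin n => X (i, j))

namespace MvPolynomial

open Finset

section ProdX

variable {R σ ι : Type*} [CommSemiring R]

theorem pderiv_prod_X_of_forall_ne {s : Finset ι} {g : ι → σ} {v : σ}
    (h : ∀ c ∈ s, g c ≠ v) : pderiv v (∏ c ∈ s, (X (g c) : MvPolynomial σ R)) = 0 := by
  classical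
  induction s using Finset.induction_on with
  | empty => simp
  | insert a s ha ih =>
    rw [prod_insert ha, Derivation.leibniz, pderiv_X_of_ne (h a (mem_insert_self a s)),
      ih fun c hc => h c (mem_insert_of_mem hc), smul_zero, smul_zero, add_zero]

theorem pderiv_prod_X_of_mem [DecidableEq ι] {s : Finset ι} {g : ι → σ} (hg : Set.InjOn g s)
    {c : ι} (hc : c ∈ s) :
    pderiv (g c) (∏ d ∈ s, (X (g d) : MvPolynomial σ R)) = ∏ d ∈ s.erase c, X (g d) := by
  have hrest : pderiv (g c) (∏ d ∈ s.erase c, (X (g d) : MvPolynomial σ R)) = 0 :=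
    pderiv_prod_X_of_forall_ne fun d hd =>
      hg.ne (mem_of_mem_erase hd) hc (ne_of_mem_erase hd)
  rw [← mul_prod_erase s _ hc, Derivation.leibniz, hrest, pderiv_X_self, smul_zero, zero_add,
    smul_eq_mul, mul_one]

end ProdX

section PermMonomial

variable {R ι : Type*} [CommSemiring R] [Fintype ι] [DecidableEq ι]

theorem pderiv_pderiv_prod_X_perm (τ : Equiv.Perm ι) {i k j l : ι} (hjl : j ≠ l) :
    pderiv (i, j) (pderiv (k, l) (∏ c, (X (τ c, c) : MvPolynomial (ι × ι) R))) =
      if τ j = i ∧ τ l = k then ∏ c ∈ univ \ {j, l}, X (τ c, c) else 0 := by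
  have hinj : Set.InjOn (fun c => (τ c, c)) (univ : Finset ι) :=
    fun a _ b _ h => congrArg Prod.snd h
  by_cases hk : τ l = k
  · subst hk
    rw [pderiv_prod_X_of_mem hinj (mem_univ l)]
    by_cases hi : τ j = i
    · subst hi
      rw [pderiv_prod_X_of_mem (hinj.mono (erase_subset l univ)) (mem_erase.2 ⟨hjl, mem_univ j⟩),
        if_pos ⟨rfl, rfl⟩, sdiff_insert, sdiff_singleton_eq_erase]
    · rw [if_neg fun h => hi h.1]
      exact pderiv_prod_X_of_forall_ne fun c _ h =>
        hi (by obtain ⟨hτ, rfl⟩ := Prod.mk.inj h; exact hτ)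
  · have hzero : pderiv (k, l) (∏ c, (X (τ c, c) : MvPolynomial (ι × ι) R)) = 0 :=
      pderiv_prod_X_of_forall_ne fun c _ h =>
        hk (by obtain ⟨hτ, rfl⟩ := Prod.mk.inj h; exact hτ)
    rw [hzero, map_zero, if_neg fun h => hk h.2]

theorem pderiv_pderiv_prod_X_perm_mul_swap (τ : Equiv.Perm ι) (i k : ι) {j l : ι}
    (hjl : j ≠ l) :
    pderiv (i, l) (pderiv (k, j)
        (∏ c, (X ((τ * Equiv.swap j l) c, c) : MvPolynomial (ι × ι) R))) =
      pderiv (i, j) (pderiv (k, l) (∏ c, X (τ c, c))) := by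
  rw [pderiv_pderiv_prod_X_perm _ hjl.symm, pderiv_pderiv_prod_X_perm _ hjl, pair_comm]
  simp only [Equiv.Perm.mul_apply, Equiv.swap_apply_left, Equiv.swap_apply_right]
  refine if_congr Iff.rfl (prod_congr rfl fun c hc => ?_) rfl
  simp only [mem_sdiff, mem_insert, mem_singleton, not_or] at hc
  rw [Equiv.swap_apply_of_ne_of_ne hc.2.1 hc.2.2]

end PermMonomial

end MvPolynomial

theorem genericDet_eq_sum_perm (n : ℕ) (K : Type) [Field K] :
    genericDet n K = ∑ τ : Equiv.Perm (Fin n), Equiv.Perm.sign τ • ∏ c, X (τ c, c) := by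
  rw [genericDet, Matrix.det_apply]
  rfl

theorem permanent_annihilates_det_general (K : Type) [Field K]
    (n : ℕ) (i k j l : Fin n) (hjl : j < l) :
    pderiv (i, j) (pderiv (k, l) (genericDet n K)) +
      pderiv (i, l) (pderiv (k, j) (genericDet n K)) = 0 := by
  simp only [genericDet_eq_sum_perm, map_sum, Units.smul_def, map_zsmul]
  conv_lhs => enter [2]; rw [← Equiv.sum_comp (Equiv.mulRight (Equiv.swap j l))]
  rw [← Finset.sum_add_distrib]
  refine Finset.sum_eq_zero fun τ _ => ?_
  rw [Equiv.coe_mulRight, pderiv_pderiv_prod_X_perm_mul_swap τ i k hjl.ne, Equiv.Perm.sign_mul,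
    Equiv.Perm.sign_swap hjl.ne, mul_neg_one, Units.val_neg, neg_smul, add_neg_cancel]

/-- each `2 × 2` permanent of the dual variables annihilates the
determinant of the generic matrix. -/
theorem permanent_annihilates_det (K : Type) [Field K] (h2 : (2 : K) ≠ 0)
    (n : ℕ) (hn : 2 ≤ n) (i k j l : Fin n) (hik : i < k) (hjl : j < l) :
    pderiv (i, j) (pderiv (k, l) (genericDet n K)) +
      pderiv (i, l) (pderiv (k, j) (genericDet n K)) = 0 :=
  permanent_annihilates_det_general K n i k j l hjl
end

section
/- Let n ≥ 2 and let A = (a_{ij}) be an n×n matrix of distinct indeterminates over a field of characteristic ≠ 2. For any indices i < k and j < l, the differential operator d_{ij}d_{kl} − d_{il}d_{kj} (the 2×2 minor of the corresponding submatrix of dual variables) annihilates the permanent Per(A) = Σ_{σ ∈ S_n} Π_i a_{i,σ(i)} under the contraction action. -/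
/-!
For `i ≠ k`, differentiating the monomial `∏ m, a_{m, σ m}` by `a_{i j}` and `a_{k l}` leaves
`∏_{m ≠ i, k} a_{m, σ m}` if `σ i = j` and `σ k = l`, and `0` otherwise. Replacing `σ` by
`(j l) * σ` fixes that remaining product and exchanges the conditions with `σ i = l`, `σ k = j`,
so this reindexing of the sum over `σ` matches the terms of `∂_{i j} ∂_{k l} Per` with those of
`∂_{i l} ∂_{k j} Per` one by one.
-/

open MvPolynomial

/-- The permanent of the generic `n × n` matrix of indeterminates. -/
noncomputable def genericPerm (n : ℕ) (K : Type) [Field K] :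
    MvPolynomial (Fin n × Fin n) K :=
  ∑ σ : Equiv.Perm (Fin n), ∏ i : Fin n, X (i, σ i)

section GraphMonomial

variable {R ι κ : Type*} [CommSemiring R]

lemma pderiv_prod_X_eq_zero_of_notMem (f : ι → κ) {s : Finset ι} {p : ι} (hp : p ∉ s) (b : κ) :
    pderiv (p, b) (∏ m ∈ s, (X (m, f m) : MvPolynomial (ι × κ) R)) = 0 :=
  Finset.prod_induction _ (fun q => pderiv (p, b) q = 0)
    (fun _ _ hq hq' => by rw [pderiv_mul, hq, hq', mul_zero, zero_mul, add_zero]) pderiv_one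
    (fun m hm => pderiv_X_of_ne fun h => hp ((Prod.mk.inj h).1 ▸ hm))

lemma pderiv_prod_X [DecidableEq ι] [DecidableEq κ] (f : ι → κ) (s : Finset ι) (p : ι) (b : κ) :
    pderiv (p, b) (∏ m ∈ s, (X (m, f m) : MvPolynomial (ι × κ) R)) =
      if p ∈ s ∧ f p = b then ∏ m ∈ s.erase p, X (m, f m) else 0 := by
  by_cases hp : p ∈ s
  · rw [← Finset.mul_prod_erase s _ hp, pderiv_mul,
      pderiv_prod_X_eq_zero_of_notMem f (s.notMem_erase p) b, mul_zero, add_zero]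
    by_cases hb : f p = b
    · subst hb
      simp [hp]
    · rw [pderiv_X_of_ne (by simp [hb]), zero_mul, if_neg fun h => hb h.2]
  · rw [pderiv_prod_X_eq_zero_of_notMem f hp b, if_neg fun h => hp h.1]

lemma pderiv_pderiv_prod_X [DecidableEq ι] [DecidableEq κ] [Fintype ι] (f : ι → κ) {i k : ι}
    (hik : i ≠ k) (j l : κ) :
    pderiv (i, j) (pderiv (k, l) (∏ m, (X (m, f m) : MvPolynomial (ι × κ) R))) =
      if f i = j ∧ f k = l then ∏ m ∈ (Finset.univ.erase k).erase i, X (m, f m) else 0 := by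
  rw [pderiv_prod_X]
  by_cases hk : f k = l
  · rw [if_pos ⟨Finset.mem_univ k, hk⟩, pderiv_prod_X]
    simp [hik, hk]
  · simp [hk]

lemma pderiv_pderiv_prod_X_swap [DecidableEq ι] [DecidableEq κ] [Fintype ι] {f : ι → κ}
    (hf : f.Injective) {i k : ι} (hik : i ≠ k) (j l : κ) :
    pderiv (i, j) (pderiv (k, l) (∏ m, (X (m, f m) : MvPolynomial (ι × κ) R))) =
      pderiv (i, l) (pderiv (k, j) (∏ m, X (m, Equiv.swap j l (f m)))) := by
  rw [pderiv_pderiv_prod_X f hik, pderiv_pderiv_prod_X _ hik]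
  by_cases hc : f i = j ∧ f k = l
  · rw [if_pos hc, if_pos (by simp [hc.1, hc.2])]
    refine Finset.prod_congr rfl fun m hm => ?_
    obtain ⟨hmi, hmk, -⟩ := by simpa only [Finset.mem_erase] using hm
    rw [Equiv.swap_apply_of_ne_of_ne (hc.1 ▸ hf.ne hmi) (hc.2 ▸ hf.ne hmk)]
  · rw [if_neg hc, if_neg (by simpa [Equiv.swap_apply_eq_iff] using hc)]

end GraphMonomial

theorem minor_annihilates_permanent_general (K : Type) [Field K]
    (n : ℕ) (i k j l : Fin n) (hik : i < k) :
    pderiv (i, j) (pderiv (k, l) (genericPerm n K)) -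
      pderiv (i, l) (pderiv (k, j) (genericPerm n K)) = 0 := by
  rw [sub_eq_zero, genericPerm, map_sum, map_sum, map_sum, map_sum]
  exact Fintype.sum_equiv (Equiv.mulLeft (Equiv.swap j l)) _ _
    fun σ => pderiv_pderiv_prod_X_swap σ.injective hik.ne j l

/-- each `2 × 2` minor of the dual variables annihilates the
permanent of the generic matrix. -/
theorem minor_annihilates_permanent (K : Type) [Field K] (h2 : (2 : K) ≠ 0)
    (n : ℕ) (hn : 2 ≤ n) (i k j l : Fin n) (hik : i < k) (hjl : j < l) :
    pderiv (i, j) (pderiv (k, l) (genericPerm n K)) -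
      pderiv (i, l) (pderiv (k, j) (genericPerm n K)) = 0 :=
  minor_annihilates_permanent_general K n i k j l hik
end

section
/- For an n×n matrix A of indeterminates, the Hilbert function of the apolar algebra S/Ann(det(A)) in degree k equals C(n,k)², and hence its total length dim_k S/Ann(det(A)) = Σ_{k=0}^{n} C(n,k)² = C(2n,n). -/
open MvPolynomial

/-- Differentiation by the monomial with exponent vector `m`. -/
noncomputable def mDeriv {σ : Type} {K : Type} [CommSemiring K] (m : σ →₀ ℕ)
    (F : MvPolynomial σ K) : MvPolynomial σ K :=
  (Finsupp.toMultiset m).toList.foldr (fun p G => pderiv p G) F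

/-- The contraction (apolarity) action of a dual polynomial `h` on `F`:
`h ∘ F = Σ_m coeff_m(h) • ∂^m F`. -/
noncomputable def contractAction {σ : Type} {K : Type} [CommSemiring K]
    (h F : MvPolynomial σ K) : MvPolynomial σ K :=
  ∑ m ∈ h.support, h.coeff m • mDeriv m F


/-!
Expanding `det A = ∑ σ, sign σ • ∏ j, X (σ j, j)` into squarefree monomials, `∂^m det A` vanishes
unless `m` is the exponent of `∏ j ∈ C, X (ρ j, j)` for a permutation `ρ`, and then it is, up to
sign, the minor of `A` on the rows `(ρ '' C)ᶜ` and the columns `Cᶜ`. Two such derivatives with the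
same pair `(ρ '' C, C)` differ by the sign of a permutation of `C`, every one of them is nonzero,
and those with different pairs have disjoint supports, as the support of a minor remembers its rows
and columns. Hence the derivatives of order `k` span a space with a basis indexed by the pairs of
`k`-subsets of rows and columns, of dimension `C(n,k)²`, and all derivatives together give
`∑ₖ C(n,k)² = C(2n,n)` (Vandermonde).
-/

open Finset Equiv Submodule Module

theorem Finset.image_compl_eq {α β : Type} [Fintype α] [Fintype β] [DecidableEq α]
    [DecidableEq β] {f : α → β} (hf : Function.Bijective f) (s : Finset α) :
    sᶜ.image f = (s.image f)ᶜ := by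
  rw [← coe_inj]
  push_cast
  exact Set.image_compl_eq hf

theorem Finset.exists_perm_image_eq_of_card_eq {α : Type} [Fintype α] [DecidableEq α]
    {C R : Finset α} (h : C.card = R.card) : ∃ ρ : Perm α, C.image ρ = R := by
  let e : {x // x ∈ C} ≃ {x // x ∈ R} := Fintype.equivOfCardEq (by simpa using h)
  refine ⟨e.extendSubtype, eq_of_subset_of_card_le ?_ ?_⟩
  · intro y hy
    obtain ⟨x, hx, rfl⟩ := mem_image.mp hy
    exact e.extendSubtype_mem x hx
  · rw [card_image_of_injective _ e.extendSubtype.injective, h]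

section Derivatives

variable {σ R : Type} [CommSemiring R]

theorem pderiv_monomial_of_le_one {u : σ →₀ ℕ} (hu : ∀ i, u i ≤ 1) (i : σ) (c : R) :
    pderiv i (monomial u c) =
      if Finsupp.single i 1 ≤ u then monomial (u - Finsupp.single i 1) c else 0 := by
  rw [pderiv_monomial]
  rcases Nat.le_one_iff_eq_zero_or_eq_one.mp (hu i) with h | h <;> simp [h, Finsupp.single_le_iff]

theorem foldr_pderiv_monomial_of_le_one [DecidableEq σ] (l : List σ) {u : σ →₀ ℕ}
    (hu : ∀ i, u i ≤ 1) (c : R) :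
    l.foldr (fun i G => pderiv i G) (monomial u c) =
      if Multiset.toFinsupp ↑l ≤ u then monomial (u - Multiset.toFinsupp ↑l) c else 0 := by
  induction l with
  | nil => simp
  | cons i l ih =>
    have hcons : Multiset.toFinsupp ↑(i :: l) = Multiset.toFinsupp ↑l + Finsupp.single i 1 := by
      rw [← Multiset.cons_coe, ← Multiset.singleton_add, Multiset.toFinsupp_add,
        Multiset.toFinsupp_singleton, add_comm]
    have hle_one : ∀ j, (u - Multiset.toFinsupp (l : Multiset σ)) j ≤ 1 :=
      fun j => tsub_le_self.trans (hu j)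
    rw [List.foldr_cons, ih, hcons]
    split_ifs with hl hil hil
    · rw [pderiv_monomial_of_le_one hle_one, if_pos ((le_tsub_iff_left hl).mpr hil), tsub_tsub]
    · rw [pderiv_monomial_of_le_one hle_one, if_neg fun h => hil ((le_tsub_iff_left hl).mp h)]
    · exact absurd (le_self_add.trans hil) hl
    · exact map_zero _

theorem mDeriv_monomial_of_le_one (m : σ →₀ ℕ) {u : σ →₀ ℕ} (hu : ∀ i, u i ≤ 1) (c : R) :
    mDeriv m (monomial u c) = if m ≤ u then monomial (u - m) c else 0 := by
  classical
  rw [mDeriv, foldr_pderiv_monomial_of_le_one _ hu, Multiset.coe_toList,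
    Finsupp.toMultiset_toFinsupp]

theorem mDeriv_sum {ι : Type} (m : σ →₀ ℕ) (s : Finset ι) (f : ι → MvPolynomial σ R) :
    mDeriv m (∑ i ∈ s, f i) = ∑ i ∈ s, mDeriv m (f i) := by
  unfold mDeriv
  induction (Finsupp.toMultiset m).toList with
  | nil => rfl
  | cons i l ih => simp only [List.foldr_cons, ih, map_sum]

theorem contractAction_monomial_one [Nontrivial R] (m : σ →₀ ℕ) (F : MvPolynomial σ R) :
    contractAction (monomial m 1) F = mDeriv m F := by
  classical
  simp [contractAction, support_monomial]

theorem homogeneousSubmodule_eq_restrictSupport (k : ℕ) :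
    homogeneousSubmodule σ R k = restrictSupport R {d | d.degree = k} :=
  homogeneousSubmodule_eq_finsupp_supported σ R k

theorem span_contractAction_restrictSupport [Nontrivial R] (s : Set (σ →₀ ℕ))
    (F : MvPolynomial σ R) :
    span R {G | ∃ h ∈ restrictSupport R s, G = contractAction h F} =
      span R ((mDeriv · F) '' s) := by
  refine le_antisymm (span_le.mpr ?_) (span_le.mpr ?_)
  · rintro _ ⟨h, hh, rfl⟩
    exact sum_mem fun m hm =>
      smul_mem _ _ (subset_span ⟨m, (mem_restrictSupport_iff R).mp hh hm, rfl⟩)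
  · rintro _ ⟨m, hm, rfl⟩
    exact subset_span ⟨monomial m 1, (monomial_mem_restrictSupport R).mpr (Or.inl hm),
      (contractAction_monomial_one m F).symm⟩

end Derivatives

section GraphExponent

variable {α β : Type}

noncomputable def graphExponent (C : Finset β) (f : β → α) : α × β →₀ ℕ :=
  ∑ j ∈ C, Finsupp.single (f j, j) 1

theorem graphExponent_apply [DecidableEq α] [DecidableEq β] (C : Finset β) (f : β → α)
    (i : α) (j : β) : graphExponent C f (i, j) = if j ∈ C ∧ f j = i then 1 else 0 := by
  rw [graphExponent, Finsupp.finsetSum_apply]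
  by_cases hj : j ∈ C
  · rw [sum_eq_single j (fun b _ hb => Finsupp.single_eq_of_ne (by simp [Ne.symm hb]))
      fun h => absurd hj h]
    simp [Finsupp.single_apply, hj]
  · rw [sum_eq_zero fun b hb => Finsupp.single_eq_of_ne (by simp; rintro - rfl; exact hj hb)]
    simp [hj]

theorem graphExponent_le_one (C : Finset β) (f : β → α) (p : α × β) :
    graphExponent C f p ≤ 1 := by
  classical
  rw [graphExponent_apply]
  split <;> omega

theorem support_graphExponent [DecidableEq α] [DecidableEq β] (C : Finset β) (f : β → α) :
    (graphExponent C f).support = C.image fun j => (f j, j) := by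
  ext ⟨i, j⟩
  simp [graphExponent_apply, and_comm, eq_comm]

theorem degree_graphExponent (C : Finset β) (f : β → α) :
    (graphExponent C f).degree = C.card := by
  simp [graphExponent, map_sum, Finsupp.degree_single]

theorem graphExponent_congr {C : Finset β} {f g : β → α} (h : ∀ j ∈ C, f j = g j) :
    graphExponent C f = graphExponent C g :=
  sum_congr rfl fun j hj => by rw [h j hj]

theorem graphExponent_le_iff {C D : Finset β} {f g : β → α} (hCD : C ⊆ D) :
    graphExponent C f ≤ graphExponent D g ↔ ∀ j ∈ C, f j = g j := by
  classical
  constructor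
  · intro h j hj
    have := h (f j, j)
    simp only [graphExponent_apply, hj, hCD hj, true_and, if_true] at this
    split_ifs at this with hfg
    · exact hfg.symm
    · omega
  · intro h ⟨i, j⟩
    simp only [graphExponent_apply]
    split_ifs with h1 h2
    exacts [le_rfl, absurd ⟨hCD h1.1, (h j h1.1).symm.trans h1.2⟩ h2, Nat.zero_le _, le_rfl]

theorem eq_of_graphExponent_eq {C : Finset β} {f g : β → α}
    (h : graphExponent C f = graphExponent C g) : ∀ j ∈ C, f j = g j :=
  (graphExponent_le_iff subset_rfl).mp h.le

theorem graphExponent_add_compl [Fintype β] [DecidableEq β] (C : Finset β) (f : β → α) :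
    graphExponent C f + graphExponent Cᶜ f = graphExponent univ f :=
  sum_add_sum_compl C _

theorem exists_eq_graphExponent_of_le [Fintype β] {m : α × β →₀ ℕ} {f : β → α}
    (h : m ≤ graphExponent univ f) : ∃ C, m = graphExponent C f := by
  classical
  refine ⟨univ.filter fun j => m (f j, j) ≠ 0, Finsupp.ext fun ⟨i, j⟩ => ?_⟩
  have hij := h (i, j)
  rw [graphExponent_apply] at hij ⊢
  by_cases hfj : f j = i
  · subst hfj
    simp only [mem_univ, true_and, and_true, mem_filter, if_true] at hij ⊢
    split_ifs <;> omega
  · simp only [hfj, and_false, if_false] at hij ⊢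
    omega

end GraphExponent

section GenericDet

variable {n : ℕ} {K : Type} [Field K]

theorem genericDet_eq_sum : genericDet n K =
    ∑ σ : Perm (Fin n), monomial (graphExponent univ σ) ((Perm.sign σ : ℤ) : K) := by
  refine (Matrix.det_apply _).trans (sum_congr rfl fun σ _ => ?_)
  simp only [Matrix.of_apply, X, graphExponent]
  rw [← monomial_sum_one, Units.smul_def, smul_monomial, Int.smul_one_eq_cast]

theorem mDeriv_genericDet (m : Fin n × Fin n →₀ ℕ) :
    mDeriv m (genericDet n K) = ∑ σ : Perm (Fin n), if m ≤ graphExponent univ σ then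
      monomial (graphExponent univ σ - m) ((Perm.sign σ : ℤ) : K) else 0 := by
  rw [genericDet_eq_sum, mDeriv_sum]
  exact sum_congr rfl fun σ _ => mDeriv_monomial_of_le_one _ (graphExponent_le_one _ _) _

theorem mDeriv_genericDet_eq_zero_or (m : Fin n × Fin n →₀ ℕ) :
    mDeriv m (genericDet n K) = 0 ∨
      ∃ (ρ : Perm (Fin n)) (C : Finset (Fin n)), m = graphExponent C ρ := by
  by_cases h : ∃ ρ : Perm (Fin n), m ≤ graphExponent univ ρ
  · obtain ⟨ρ, hρ⟩ := h
    exact Or.inr ⟨ρ, exists_eq_graphExponent_of_le hρ⟩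
  · push Not at h
    exact Or.inl (by simp [mDeriv_genericDet, h])

theorem mDeriv_graphExponent_genericDet (C : Finset (Fin n)) (ρ : Perm (Fin n)) :
    mDeriv (graphExponent C ρ) (genericDet n K) =
      ∑ σ : Perm (Fin n), if ∀ j ∈ C, σ j = ρ j then
        monomial (graphExponent Cᶜ σ) ((Perm.sign σ : ℤ) : K) else 0 := by
  rw [mDeriv_genericDet]
  refine sum_congr rfl fun σ _ => ?_
  have hle := graphExponent_le_iff (f := ρ) (g := σ) (subset_univ C)
  split_ifs with h1 h2 h2
  · rw [graphExponent_congr fun j hj => (h2 j hj).symm, ← graphExponent_add_compl C σ,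
      add_tsub_cancel_left]
  · exact absurd (fun j hj => (hle.mp h1 j hj).symm) h2
  · exact absurd (hle.mpr fun j hj => (h2 j hj).symm) h1
  · rfl

theorem mDeriv_graphExponent_mul_ofSubtype_genericDet (C : Finset (Fin n)) (ρ : Perm (Fin n))
    (e : Perm {j // j ∈ C}) :
    mDeriv (graphExponent C ⇑(ρ * Perm.ofSubtype e)) (genericDet n K) =
      ((Perm.sign (Perm.ofSubtype e) : ℤ) : K) •
        mDeriv (graphExponent C ρ) (genericDet n K) := by
  set π := Perm.ofSubtype e
  -- Reindex the sum by `τ ↦ τ * π`: as `π` permutes `C` and fixes `Cᶜ` pointwise, this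
  -- turns the constraint `τ = ρ` on `C` into `τ * π = ρ * π` and keeps the monomial on `Cᶜ`.
  have hmem : ∀ j, π j ∈ C ↔ j ∈ C := Perm.ofSubtype_apply_mem_iff_mem e
  have hcond : ∀ τ : Perm (Fin n),
      (∀ j ∈ C, (τ * π) j = (ρ * π) j) ↔ ∀ j ∈ C, τ j = ρ j := fun τ =>
    ⟨fun h j hj => by simpa using h (π⁻¹ j) ((hmem _).mp (by simpa using hj)),
      fun h j hj => h (π j) ((hmem j).mpr hj)⟩
  have hcompl : ∀ τ : Perm (Fin n), graphExponent Cᶜ ⇑(τ * π) = graphExponent Cᶜ τ :=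
    fun τ => graphExponent_congr fun j hj => by
      rw [Perm.mul_apply, Perm.ofSubtype_apply_of_not_mem e (by simpa using hj)]
  rw [mDeriv_graphExponent_genericDet, mDeriv_graphExponent_genericDet, smul_sum,
    ← Equiv.sum_comp (Equiv.mulRight π)]
  refine sum_congr rfl fun τ _ => ?_
  simp only [Equiv.coe_mulRight, hcond, hcompl, Perm.sign_mul, smul_ite, smul_zero,
    smul_monomial]
  congr 2
  push_cast
  ring

theorem exists_mDeriv_graphExponent_eq_smul {C : Finset (Fin n)} {ρ ρ' : Perm (Fin n)}
    (h : C.image ρ = C.image ρ') :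
    ∃ c : K, mDeriv (graphExponent C ρ') (genericDet n K) =
      c • mDeriv (graphExponent C ρ) (genericDet n K) := by
  have hC : ∀ j, (ρ⁻¹ * ρ') j ∈ C ↔ j ∈ C := fun j => by
    rw [← ρ.injective.mem_finset_image, h, ← ρ'.injective.mem_finset_image]
    simp
  refine ⟨_, Eq.trans ?_
    (mDeriv_graphExponent_mul_ofSubtype_genericDet C ρ ((ρ⁻¹ * ρ').subtypePerm hC))⟩
  refine congrArg (mDeriv · _) (graphExponent_congr fun j hj => ?_)
  rw [Perm.mul_apply, Perm.ofSubtype_subtypePerm_of_mem hC hj]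
  simp

theorem coeff_mDeriv_graphExponent_genericDet (C : Finset (Fin n)) (ρ : Perm (Fin n)) :
    coeff (graphExponent Cᶜ ρ) (mDeriv (graphExponent C ρ) (genericDet n K)) =
      ((Perm.sign ρ : ℤ) : K) := by
  rw [mDeriv_graphExponent_genericDet, coeff_sum, sum_eq_single ρ]
  · simp
  · intro σ _ hσ
    split_ifs with h
    · rw [coeff_monomial, if_neg]
      intro hcompl
      refine hσ (Perm.ext fun j => ?_)
      by_cases hj : j ∈ C
      · exact h j hj
      · exact eq_of_graphExponent_eq hcompl j (by simpa using hj)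
    · exact coeff_zero _
  · simp

theorem mDeriv_graphExponent_genericDet_ne_zero (C : Finset (Fin n)) (ρ : Perm (Fin n)) :
    mDeriv (graphExponent C ρ) (genericDet n K) ≠ 0 := fun h => by
  have := coeff_mDeriv_graphExponent_genericDet (K := K) C ρ
  rw [h, coeff_zero] at this
  exact ((Perm.sign ρ).isUnit.map (Int.castRingHom K)).ne_zero this.symm

theorem image_support_of_mem_support_mDeriv {C : Finset (Fin n)} {ρ : Perm (Fin n)}
    {d : Fin n × Fin n →₀ ℕ}
    (hd : d ∈ (mDeriv (graphExponent C ρ) (genericDet n K)).support) :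
    d.support.image Prod.fst = (C.image ρ)ᶜ ∧ d.support.image Prod.snd = Cᶜ := by
  rw [mDeriv_graphExponent_genericDet] at hd
  obtain ⟨σ, -, hσ⟩ := mem_biUnion.mp (support_sum hd)
  split_ifs at hσ with hσρ
  · obtain rfl := mem_singleton.mp (support_monomial_subset hσ)
    rw [support_graphExponent, image_image, image_image]
    refine ⟨?_, image_id'⟩
    change Cᶜ.image σ = _
    rw [image_compl_eq σ.bijective, image_congr hσρ]
  · simp at hσ

end GenericDet

section LinearAlgebra

variable {σ K : Type} [Field K]

theorem linearIndependent_of_pairwise_disjoint_support {ι : Type} {v : ι → MvPolynomial σ K}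
    (hv : ∀ i, v i ≠ 0) (hdisj : Pairwise fun i j => Disjoint (v i).support (v j).support) :
    LinearIndependent K v := by
  rw [linearIndependent_iff']
  intro s g hsum i hi
  obtain ⟨d, hd⟩ := nonempty_iff_ne_empty.mpr ((not_congr support_eq_empty).mpr (hv i))
  have hcoeff := congrArg (coeff d) hsum
  rw [coeff_sum, coeff_zero, sum_eq_single_of_mem i hi fun j _ hji => by
    rw [coeff_smul, notMem_support_iff.mp (disjoint_left.mp (hdisj hji.symm) hd),
      smul_zero], coeff_smul, smul_eq_mul] at hcoeff
  exact (mul_eq_zero.mp hcoeff).resolve_right (mem_support_iff.mp hd)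

theorem finrank_span_range_eq_card_image {ι κ : Type} [Fintype ι] [DecidableEq κ]
    (v : ι → MvPolynomial σ K) (key : ι → κ) (hv : ∀ i, v i ≠ 0)
    (hkey : ∀ i j, key i = key j → ∃ c : K, v j = c • v i)
    (hdisj : ∀ i j, key i ≠ key j → Disjoint (v i).support (v j).support) :
    finrank K (span K (Set.range v)) = (univ.image key).card := by
  choose s hs using fun t : ↥(univ.image key) => mem_image.mp t.2
  have hspan : span K (Set.range v) = span K (Set.range (v ∘ s)) := by
    refine le_antisymm (span_le.mpr ?_) (span_mono (Set.range_comp_subset_range s v))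
    rintro _ ⟨i, rfl⟩
    obtain ⟨c, hc⟩ := hkey (s ⟨key i, mem_image_of_mem key (mem_univ i)⟩) i (hs _).2
    rw [hc]
    exact smul_mem _ _ (subset_span ⟨_, rfl⟩)
  rw [hspan, finrank_span_eq_card, Fintype.card_coe]
  refine linearIndependent_of_pairwise_disjoint_support (fun t => hv _)
    fun t t' htt' => hdisj _ _ ?_
  rw [(hs t).2, (hs t').2]
  exact fun h => htt' (Subtype.ext h)

end LinearAlgebra

def sameCardPairs (n : ℕ) (p : ℕ → Prop) [DecidablePred p] :
    Finset (Finset (Fin n) × Finset (Fin n)) :=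
  univ.filter fun t => t.1.card = t.2.card ∧ p t.2.card

section Count

variable {n : ℕ}

theorem image_perm_image_eq_sameCardPairs (p : ℕ → Prop) [DecidablePred p] :
    univ.image (fun x : {x : Perm (Fin n) × Finset (Fin n) // p x.2.card} =>
      (x.1.2.image x.1.1, x.1.2)) = sameCardPairs n p := by
  ext ⟨R, C⟩
  simp only [sameCardPairs, mem_image, mem_univ, true_and, mem_filter, Prod.mk.injEq,
    Subtype.exists]
  constructor
  · rintro ⟨⟨ρ, C⟩, hp, rfl, rfl⟩
    exact ⟨card_image_of_injective _ ρ.injective, hp⟩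
  · rintro ⟨hRC, hp⟩
    obtain ⟨ρ, hρ⟩ := exists_perm_image_eq_of_card_eq hRC.symm
    exact ⟨(ρ, C), hp, hρ, rfl⟩

theorem card_sameCardPairs_eq (k : ℕ) : (sameCardPairs n (· = k)).card = n.choose k ^ 2 := by
  have : sameCardPairs n (· = k) = univ.powersetCard k ×ˢ univ.powersetCard k := by
    ext ⟨R, C⟩
    simp only [sameCardPairs, mem_filter, mem_univ, true_and, mem_product, mem_powersetCard,
      subset_univ]
    constructor
    · rintro ⟨h1, h2⟩; exact ⟨h1.trans h2, h2⟩
    · rintro ⟨h1, h2⟩; exact ⟨h1.trans h2.symm, h2⟩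
  rw [this, card_product, card_powersetCard, card_univ, Fintype.card_fin, sq]

theorem card_sameCardPairs_true : (sameCardPairs n fun _ => True).card = (2 * n).choose n := by
  rw [card_eq_sum_card_fiberwise (f := fun t => t.2.card) (t := range (n + 1))
    fun t _ => mem_range_succ_iff.mpr (card_le_univ t.2 |>.trans_eq (Fintype.card_fin n)),
    ← Nat.sum_range_choose_sq]
  refine sum_congr rfl fun k _ => ?_
  rw [← card_sameCardPairs_eq k, sameCardPairs, sameCardPairs, filter_filter]
  simp

end Count

theorem finrank_span_mDeriv_genericDet {n : ℕ} {K : Type} [Field K] (p : ℕ → Prop)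
    [DecidablePred p] :
    finrank K (span K ((mDeriv · (genericDet n K)) '' {m | p m.degree})) =
      (sameCardPairs n p).card := by
  let v (x : {x : Perm (Fin n) × Finset (Fin n) // p x.2.card}) :
      MvPolynomial (Fin n × Fin n) K :=
    mDeriv (graphExponent x.1.2 x.1.1) (genericDet n K)
  have hspan :
      span K ((mDeriv · (genericDet n K)) '' {m | p m.degree}) = span K (Set.range v) := by
    refine le_antisymm (span_le.mpr ?_) (span_mono ?_)
    · rintro _ ⟨m, hm, rfl⟩
      rcases mDeriv_genericDet_eq_zero_or (K := K) m with h | ⟨ρ, C, rfl⟩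
      · simp only [SetLike.mem_coe, h, zero_mem]
      · exact subset_span ⟨⟨(ρ, C), by simpa [degree_graphExponent] using hm⟩, rfl⟩
    · rintro _ ⟨⟨⟨ρ, C⟩, hC⟩, rfl⟩
      exact ⟨graphExponent C ρ, by simpa [degree_graphExponent] using hC, rfl⟩
  rw [hspan, ← image_perm_image_eq_sameCardPairs]
  refine finrank_span_range_eq_card_image v _
    (fun x => mDeriv_graphExponent_genericDet_ne_zero _ _) ?_ ?_
  · rintro ⟨⟨ρ, C⟩, _⟩ ⟨⟨ρ', C'⟩, _⟩ h
    obtain ⟨hR, rfl⟩ := Prod.ext_iff.mp h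
    exact exists_mDeriv_graphExponent_eq_smul hR
  · intro x y hxy
    refine disjoint_left.mpr fun d hx hy => hxy ?_
    obtain ⟨hx1, hx2⟩ := image_support_of_mem_support_mDeriv hx
    obtain ⟨hy1, hy2⟩ := image_support_of_mem_support_mDeriv hy
    exact Prod.ext (compl_injective (hx1.symm.trans hy1)) (compl_injective (hx2.symm.trans hy2))

theorem hilbert_apolar_det_general (K : Type) [Field K]
    (n k : ℕ) :
    Module.finrank K
        (Submodule.span K
          {G : MvPolynomial (Fin n × Fin n) K |
            ∃ h ∈ homogeneousSubmodule (Fin n × Fin n) K k,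
              G = contractAction h (genericDet n K)}) = (n.choose k) ^ 2 ∧
      Module.finrank K
          (Submodule.span K
            {G : MvPolynomial (Fin n × Fin n) K |
              ∃ h : MvPolynomial (Fin n × Fin n) K,
                G = contractAction h (genericDet n K)}) = (2 * n).choose n := by
  constructor
  · rw [homogeneousSubmodule_eq_restrictSupport, span_contractAction_restrictSupport,
      finrank_span_mDeriv_genericDet (· = k), card_sameCardPairs_eq]
  · have hall := span_contractAction_restrictSupport Set.univ (genericDet n K)
    simp only [restrictSupport_univ, Submodule.mem_top, true_and] at hall
    rw [hall, ← Set.ofPred_true, finrank_span_mDeriv_genericDet fun _ => True,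
      card_sameCardPairs_true]

/-- the Hilbert function of the apolar algebra `S/Ann(det A)` in
degree `k` (the dimension of the image of the degree-`k` component of `S`
acting on `det A`) equals `C(n,k)²`, and the total length (the dimension of
the image of all of `S` acting on `det A`) equals `C(2n,n)`. -/
theorem hilbert_apolar_det (K : Type) [Field K] [CharZero K]
    (n k : ℕ) (hk : k ≤ n) :
    Module.finrank K
        (Submodule.span K
          {G : MvPolynomial (Fin n × Fin n) K |
            ∃ h ∈ homogeneousSubmodule (Fin n × Fin n) K k,
              G = contractAction h (genericDet n K)}) = (n.choose k) ^ 2 ∧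
      Module.finrank K
          (Submodule.span K
            {G : MvPolynomial (Fin n × Fin n) K |
              ∃ h : MvPolynomial (Fin n × Fin n) K,
                G = contractAction h (genericDet n K)}) = (2 * n).choose n :=
  hilbert_apolar_det_general K n k
end

section
/- Let X be the generic 2n×2n skew-symmetric matrix of indeterminates (x_{ij} = −x_{ji}, x_{ii} = 0). For any indices i₁ < i₂ < i₃ < i₄, each of the three binomial operators y_{i₁i₂}y_{i₃i₄} + y_{i₁i₃}y_{i₂i₄}, y_{i₁i₂}y_{i₃i₄} − y_{i₁i₄}y_{i₂i₃}, and y_{i₁i₃}y_{i₂i₄} + y_{i₁i₄}y_{i₂i₃} annihilates the Pfaffian Pf(X) under the differentiation action. -/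
open MvPolynomial

/-- Position `2i` in `Fin (2n)`. -/
def pos0 {n : ℕ} (i : Fin n) : Fin (2 * n) := ⟨2 * i.val, by have := i.isLt; omega⟩

/-- Position `2i + 1` in `Fin (2n)`. -/
def pos1 {n : ℕ} (i : Fin n) : Fin (2 * n) := ⟨2 * i.val + 1, by have := i.isLt; omega⟩

/-- The set `F_{2n}` of permutations `σ` of `{1,…,2n}` with
`σ(1) < σ(3) < ⋯ < σ(2n-1)` and `σ(2i-1) < σ(2i)` for all `i`. -/
noncomputable def pfPerms (n : ℕ) : Finset (Equiv.Perm (Fin (2 * n))) :=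
  @Finset.filter _
    (fun σ => (∀ i : Fin n, σ (pos0 i) < σ (pos1 i)) ∧
      ∀ i j : Fin n, i < j → σ (pos0 i) < σ (pos0 j))
    (Classical.decPred _) Finset.univ

/-- The Pfaffian-type sum associated to an entry function `E` on a
`2n × 2n` index set. -/
noncomputable def pfaffOf {n : ℕ} {P : Type} [CommRing P]
    (E : Fin (2 * n) → Fin (2 * n) → P) : P :=
  ∑ σ ∈ pfPerms n, (Equiv.Perm.sign σ : ℤ) •
    ∏ i : Fin n, E (σ (pos0 i)) (σ (pos1 i))

/-- Index set for the independent entries of a generic skew-symmetric matrix. -/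
abbrev SkVar (n : ℕ) := {p : Fin (2 * n) × Fin (2 * n) // p.1 < p.2}

/-- The `(a,b)` entry of the generic `2n × 2n` skew-symmetric matrix. -/
noncomputable def skewEntry (n : ℕ) (K : Type) [Field K] (a b : Fin (2 * n)) :
    MvPolynomial (SkVar n) K :=
  if h : a < b then X ⟨(a, b), h⟩
  else if h' : b < a then - X ⟨(b, a), h'⟩ else 0

/-- The Pfaffian of the generic `2n × 2n` skew-symmetric matrix. -/
noncomputable def genPf (n : ℕ) (K : Type) [Field K] : MvPolynomial (SkVar n) K :=
  pfaffOf (skewEntry n K)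

/-!
Differentiating `Pf(X)` by `x_{ab}` and `x_{cd}` (disjoint pairs) keeps exactly the terms whose
perfect matching contains the edges `{a, b}` and `{c, d}`, and leaves the monomial of the rest of
the matching. If `π` moves only `a, b, c, d` and keeps both pairs ordered, then `σ ↦ π σ` (with
its blocks re-sorted) matches these terms bijectively with those containing `{π a, π b}` and
`{π c, π d}`, with the same remaining monomial and the sign multiplied by `sgn π`. The
transpositions `(i₂ i₃)` and `(i₃ i₄)` thus give `∂₁₂∂₃₄ Pf = -∂₁₃∂₂₄ Pf = ∂₁₄∂₂₃ Pf`.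
-/

lemma MvPolynomial.pderiv_pderiv_monomial_one {R σ : Type*} [CommSemiring R] {s : σ →₀ ℕ}
    {v w : σ} (hvw : v ≠ w) (hv : s v ≤ 1) (hw : s w ≤ 1) :
    pderiv v (pderiv w (monomial s (1 : R))) =
      if s v ≠ 0 ∧ s w ≠ 0 then monomial (s - Finsupp.single w 1 - Finsupp.single v 1) 1
      else 0 := by
  have hsv : (s - Finsupp.single w 1 : σ →₀ ℕ) v = s v := by simp [hvw.symm]
  rw [pderiv_monomial, pderiv_monomial, hsv]
  interval_cases s v <;> interval_cases s w <;> simp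

lemma Equiv.Perm.support_subset_image {α : Type*} [DecidableEq α] [Fintype α] {π : Perm α}
    {s : Finset α} (h : π.support ⊆ s) : π.support ⊆ s.image π := fun x hx =>
  Finset.mem_image.2 ⟨π⁻¹ x, h (Perm.apply_mem_support.1 (by simpa using hx)), by simp⟩

namespace Pfaffian

open Equiv Equiv.Perm Finsupp Finset

variable {n : ℕ}

def finPairEquiv (n : ℕ) : Fin n × Fin 2 ≃ Fin (2 * n) :=
  finProdFinEquiv.trans (finCongr (Nat.mul_comm n 2))

lemma finPairEquiv_apply_val (p : Fin n × Fin 2) :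
    (finPairEquiv n p).val = 2 * p.1.val + p.2.val := by
  simp [finPairEquiv, finProdFinEquiv]; omega

lemma pos0_eq_finPairEquiv (i : Fin n) : pos0 i = finPairEquiv n (i, 0) :=
  Fin.ext <| by simp [pos0, finPairEquiv_apply_val]

lemma pos1_eq_finPairEquiv (i : Fin n) : pos1 i = finPairEquiv n (i, 1) :=
  Fin.ext <| by simp [pos1, finPairEquiv_apply_val]

lemma pos0_injective : Function.Injective (pos0 : Fin n → Fin (2 * n)) := by
  intro i j h
  simpa [pos0_eq_finPairEquiv] using h

lemma pos1_injective : Function.Injective (pos1 : Fin n → Fin (2 * n)) := by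
  intro i j h
  simpa [pos1_eq_finPairEquiv] using h

lemma pos0_ne_pos1 (i j : Fin n) : pos0 i ≠ pos1 j := by
  simp [pos0_eq_finPairEquiv, pos1_eq_finPairEquiv]

def blockPerm (n : ℕ) : Perm (Fin n) →* Perm (Fin (2 * n)) where
  toFun τ := (finPairEquiv n).permCongr (prodCongrLeft fun _ => τ)
  map_one' := by
    ext x
    obtain ⟨⟨i, j⟩, rfl⟩ := (finPairEquiv n).surjective x
    simp [permCongr_apply]
  map_mul' τ τ' := by rw [← permCongr_mul]; rfl

@[simp] lemma blockPerm_pos0 (τ : Perm (Fin n)) (i : Fin n) :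
    blockPerm n τ (pos0 i) = pos0 (τ i) := by
  simp [blockPerm, pos0_eq_finPairEquiv, permCongr_apply]

@[simp] lemma blockPerm_pos1 (τ : Perm (Fin n)) (i : Fin n) :
    blockPerm n τ (pos1 i) = pos1 (τ i) := by
  simp [blockPerm, pos1_eq_finPairEquiv, permCongr_apply]

lemma sign_blockPerm (τ : Perm (Fin n)) : sign (blockPerm n τ) = 1 := by
  simp [blockPerm, sign_permCongr, sign_prodCongrLeft, Int.units_sq]

lemma mem_pfPerms {σ : Perm (Fin (2 * n))} :
    σ ∈ pfPerms n ↔ (∀ i, σ (pos0 i) < σ (pos1 i)) ∧ StrictMono fun i => σ (pos0 i) := by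
  simp only [pfPerms, Finset.mem_filter, Finset.mem_univ, true_and]
  rfl

noncomputable def sortBlocks (σ : Perm (Fin (2 * n))) : Perm (Fin (2 * n)) :=
  σ * blockPerm n (Tuple.sort fun k => σ (pos0 k))

lemma sortBlocks_pos0 (σ : Perm (Fin (2 * n))) (i : Fin n) :
    sortBlocks σ (pos0 i) = σ (pos0 (Tuple.sort (fun k => σ (pos0 k)) i)) := by
  rw [sortBlocks, Perm.mul_apply, blockPerm_pos0]

lemma sortBlocks_pos1 (σ : Perm (Fin (2 * n))) (i : Fin n) :
    sortBlocks σ (pos1 i) = σ (pos1 (Tuple.sort (fun k => σ (pos0 k)) i)) := by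
  rw [sortBlocks, Perm.mul_apply, blockPerm_pos1]

lemma sign_sortBlocks (σ : Perm (Fin (2 * n))) : sign (sortBlocks σ) = sign σ := by
  rw [sortBlocks, map_mul, sign_blockPerm, mul_one]

lemma sortBlocks_mem_pfPerms {σ : Perm (Fin (2 * n))} (hσ : ∀ i, σ (pos0 i) < σ (pos1 i)) :
    sortBlocks σ ∈ pfPerms n := by
  refine mem_pfPerms.2 ⟨fun i => ?_, ?_⟩
  · rw [sortBlocks_pos0, sortBlocks_pos1]
    exact hσ _
  · have hinj : Function.Injective fun k => σ (pos0 k) := σ.injective.comp pos0_injective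
    have hmono := (Tuple.monotone_sort _).strictMono_of_injective
      (hinj.comp (Tuple.sort fun k => σ (pos0 k)).injective)
    intro i j hij
    show sortBlocks σ (pos0 i) < sortBlocks σ (pos0 j)
    rw [sortBlocks_pos0, sortBlocks_pos0]
    exact hmono hij

lemma sortBlocks_mul_blockPerm {σ : Perm (Fin (2 * n))} (hσ : σ ∈ pfPerms n)
    (ρ : Perm (Fin n)) : sortBlocks (σ * blockPerm n ρ) = σ := by
  have hsort : Tuple.sort (fun k => (σ * blockPerm n ρ) (pos0 k)) = ρ⁻¹ := by
    refine (Tuple.eq_sort_iff.2 ⟨?_, fun i j hij he => ?_⟩).symm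
    · intro i j hij
      simpa using (mem_pfPerms.1 hσ).2.monotone hij
    · exact absurd (by simpa using he) ((mem_pfPerms.1 hσ).2 hij).ne
  rw [sortBlocks, hsort, mul_assoc, ← map_mul, mul_inv_cancel, map_one, mul_one]

lemma sortBlocks_inv_mul_sortBlocks {σ : Perm (Fin (2 * n))} (hσ : σ ∈ pfPerms n)
    (π : Perm (Fin (2 * n))) : sortBlocks (π⁻¹ * sortBlocks (π * σ)) = σ := by
  have h : π⁻¹ * sortBlocks (π * σ) =
      σ * blockPerm n (Tuple.sort fun k => (π * σ) (pos0 k)) := by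
    rw [sortBlocks, ← mul_assoc, ← mul_assoc, inv_mul_cancel, one_mul]
  rw [h, sortBlocks_mul_blockPerm hσ]

def blockVar (σ : Perm (Fin (2 * n))) (i : Fin n) : SkVar n :=
  if h : σ (pos0 i) < σ (pos1 i) then ⟨(σ (pos0 i), σ (pos1 i)), h⟩
  else ⟨(σ (pos1 i), σ (pos0 i)),
    (not_lt.1 h).lt_of_ne (σ.injective.ne (pos0_ne_pos1 i i).symm)⟩

lemma blockVar_of_lt {σ : Perm (Fin (2 * n))} {i : Fin n} (h : σ (pos0 i) < σ (pos1 i)) :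
    blockVar σ i = ⟨(σ (pos0 i), σ (pos1 i)), h⟩ :=
  dif_pos h

lemma blockVar_mul_of_apply_eq {π σ : Perm (Fin (2 * n))} {i : Fin n}
    (h0 : π (σ (pos0 i)) = σ (pos0 i)) (h1 : π (σ (pos1 i)) = σ (pos1 i)) :
    blockVar (π * σ) i = blockVar σ i := by
  simp only [blockVar, Perm.mul_apply, h0, h1]

lemma blockVar_injective {σ : Perm (Fin (2 * n))} (hσ : ∀ i, σ (pos0 i) < σ (pos1 i)) :
    Function.Injective (blockVar σ) := by
  intro i j h
  rw [blockVar_of_lt (hσ i), blockVar_of_lt (hσ j)] at h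
  exact pos0_injective (σ.injective (congrArg (fun v => v.1.1) h))

lemma blockVar_sortBlocks (σ : Perm (Fin (2 * n))) (i : Fin n) :
    blockVar (sortBlocks σ) i = blockVar σ (Tuple.sort (fun k => σ (pos0 k)) i) := by
  simp only [blockVar, sortBlocks_pos0, sortBlocks_pos1]

noncomputable def blockExp (σ : Perm (Fin (2 * n))) : SkVar n →₀ ℕ :=
  ∑ i, single (blockVar σ i) 1

lemma blockExp_apply (σ : Perm (Fin (2 * n))) (v : SkVar n) :
    blockExp σ v = #{i | blockVar σ i = v} := by
  simp [blockExp, Finsupp.finsetSum_apply, single_apply]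

lemma blockExp_apply_ne_zero_iff {σ : Perm (Fin (2 * n))} {v : SkVar n} :
    blockExp σ v ≠ 0 ↔ ∃ i, blockVar σ i = v := by
  simp [blockExp_apply]

lemma blockExp_apply_le_one {σ : Perm (Fin (2 * n))} (hσ : ∀ i, σ (pos0 i) < σ (pos1 i))
    (v : SkVar n) : blockExp σ v ≤ 1 := by
  rw [blockExp_apply, Finset.card_le_one_iff]
  intro i j hi hj
  simp only [Finset.mem_filter, Finset.mem_univ, true_and] at hi hj
  exact blockVar_injective hσ (hi.trans hj.symm)

lemma blockExp_sortBlocks (σ : Perm (Fin (2 * n))) : blockExp (sortBlocks σ) = blockExp σ := by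
  simp only [blockExp, blockVar_sortBlocks]
  exact Equiv.sum_comp (Tuple.sort _) fun k => single (blockVar σ k) 1

lemma blockExp_sub_single_sub_single (σ : Perm (Fin (2 * n))) {p q : Fin n} (hpq : p ≠ q) :
    blockExp σ - single (blockVar σ q) 1 - single (blockVar σ p) 1 =
      ∑ k ∈ (univ.erase p).erase q, single (blockVar σ k) 1 := by
  rw [blockExp, ← Finset.add_sum_erase _ _ (mem_univ p),
    ← Finset.add_sum_erase _ _ (mem_erase.2 ⟨hpq.symm, mem_univ q⟩),
    add_left_comm, add_tsub_cancel_left, add_tsub_cancel_left]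

lemma prod_skewEntry_eq_monomial (K : Type) [Field K] {σ : Perm (Fin (2 * n))}
    (hσ : ∀ i, σ (pos0 i) < σ (pos1 i)) :
    ∏ i, skewEntry n K (σ (pos0 i)) (σ (pos1 i)) = monomial (blockExp σ) 1 := by
  rw [blockExp, monomial_sum_one]
  refine prod_congr rfl fun i _ => ?_
  rw [skewEntry, dif_pos (hσ i), blockVar_of_lt (hσ i)]
  rfl

lemma genPf_eq_sum_monomial (K : Type) [Field K] :
    genPf n K = ∑ σ ∈ pfPerms n, (sign σ : ℤ) • monomial (blockExp σ) (1 : K) :=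
  sum_congr rfl fun σ hσ => by rw [prod_skewEntry_eq_monomial K (mem_pfPerms.1 hσ).1]

noncomputable def pfPermsContaining (v w : SkVar n) : Finset (Perm (Fin (2 * n))) :=
  (pfPerms n).filter fun σ => blockExp σ v ≠ 0 ∧ blockExp σ w ≠ 0

lemma pderiv_pderiv_genPf (K : Type) [Field K] {v w : SkVar n} (hvw : v ≠ w) :
    pderiv v (pderiv w (genPf n K)) = ∑ σ ∈ pfPermsContaining v w,
      (sign σ : ℤ) • monomial (blockExp σ - single w 1 - single v 1) (1 : K) := by
  rw [pfPermsContaining, sum_filter, genPf_eq_sum_monomial, map_sum, map_sum]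
  refine sum_congr rfl fun σ hσ => ?_
  have hσ' := (mem_pfPerms.1 hσ).1
  rw [map_zsmul, map_zsmul, pderiv_pderiv_monomial_one hvw (blockExp_apply_le_one hσ' v)
    (blockExp_apply_le_one hσ' w), smul_ite, smul_zero]

lemma exists_blocks_of_mem_pfPermsContaining {a b c d : Fin (2 * n)} (hab : a < b) (hcd : c < d)
    (hac : a ≠ c) {σ : Perm (Fin (2 * n))}
    (hσ : σ ∈ pfPermsContaining ⟨(a, b), hab⟩ ⟨(c, d), hcd⟩) :
    ∃ p q, p ≠ q ∧ σ (pos0 p) = a ∧ σ (pos1 p) = b ∧ σ (pos0 q) = c ∧ σ (pos1 q) = d := by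
  obtain ⟨hσ, hv, hw⟩ := mem_filter.1 hσ
  have hσ' := (mem_pfPerms.1 hσ).1
  obtain ⟨p, hp⟩ := blockExp_apply_ne_zero_iff.1 hv
  obtain ⟨q, hq⟩ := blockExp_apply_ne_zero_iff.1 hw
  rw [blockVar_of_lt (hσ' p), Subtype.mk.injEq, Prod.mk.injEq] at hp
  rw [blockVar_of_lt (hσ' q), Subtype.mk.injEq, Prod.mk.injEq] at hq
  exact ⟨p, q, fun h => hac (by rw [← hp.1, ← hq.1, h]), hp.1, hp.2, hq.1, hq.2⟩

lemma apply_eq_of_support_subset {π σ : Perm (Fin (2 * n))} {p q k : Fin n}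
    (hπ : π.support ⊆ {σ (pos0 p), σ (pos1 p), σ (pos0 q), σ (pos1 q)})
    (hkp : k ≠ p) (hkq : k ≠ q) :
    π (σ (pos0 k)) = σ (pos0 k) ∧ π (σ (pos1 k)) = σ (pos1 k) := by
  constructor <;> refine notMem_support.1 fun h => ?_ <;> have := hπ h <;>
    simp [σ.injective.eq_iff, pos0_injective.eq_iff, pos1_injective.eq_iff, pos0_ne_pos1,
      (pos0_ne_pos1 _ _).symm, hkp, hkq] at this

lemma mul_pos0_lt_mul_pos1 {π σ : Perm (Fin (2 * n))} {p q : Fin n}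
    (hσ : ∀ i, σ (pos0 i) < σ (pos1 i))
    (hπ : π.support ⊆ {σ (pos0 p), σ (pos1 p), σ (pos0 q), σ (pos1 q)})
    (hp : π (σ (pos0 p)) < π (σ (pos1 p))) (hq : π (σ (pos0 q)) < π (σ (pos1 q))) (k : Fin n) :
    (π * σ) (pos0 k) < (π * σ) (pos1 k) := by
  rw [Perm.mul_apply, Perm.mul_apply]
  by_cases hkp : k = p
  · exact hkp ▸ hp
  by_cases hkq : k = q
  · exact hkq ▸ hq
  obtain ⟨h0, h1⟩ := apply_eq_of_support_subset hπ hkp hkq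
  rw [h0, h1]
  exact hσ k

lemma sortBlocks_mul_mem_and_blockExp_sub_eq {π σ : Perm (Fin (2 * n))}
    {a b c d a' b' c' d' : Fin (2 * n)} (hab : a < b) (hcd : c < d) (ha'b' : a' < b')
    (hc'd' : c' < d') (hac : a ≠ c) (hπ : π.support ⊆ {a, b, c, d})
    (ha : π a = a') (hb : π b = b') (hc : π c = c') (hd : π d = d')
    (hσ : σ ∈ pfPermsContaining ⟨(a, b), hab⟩ ⟨(c, d), hcd⟩) :
    sortBlocks (π * σ) ∈ pfPermsContaining ⟨(a', b'), ha'b'⟩ ⟨(c', d'), hc'd'⟩ ∧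
      blockExp (sortBlocks (π * σ)) - single ⟨(c', d'), hc'd'⟩ 1 - single ⟨(a', b'), ha'b'⟩ 1 =
        blockExp σ - single ⟨(c, d), hcd⟩ 1 - single ⟨(a, b), hab⟩ 1 := by
  have hσ' := (mem_pfPerms.1 (mem_filter.1 hσ).1).1
  obtain ⟨p, q, hpq, rfl, rfl, rfl, rfl⟩ := exists_blocks_of_mem_pfPermsContaining hab hcd hac hσ
  subst ha hb hc hd
  have hlt := mul_pos0_lt_mul_pos1 hσ' hπ ha'b' hc'd'
  have hp : blockVar (π * σ) p = ⟨(π (σ (pos0 p)), π (σ (pos1 p))), ha'b'⟩ :=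
    blockVar_of_lt (hlt p)
  have hq : blockVar (π * σ) q = ⟨(π (σ (pos0 q)), π (σ (pos1 q))), hc'd'⟩ :=
    blockVar_of_lt (hlt q)
  refine ⟨mem_filter.2 ⟨sortBlocks_mem_pfPerms hlt, ?_, ?_⟩, ?_⟩
  · exact blockExp_sortBlocks (π * σ) ▸ blockExp_apply_ne_zero_iff.2 ⟨p, hp⟩
  · exact blockExp_sortBlocks (π * σ) ▸ blockExp_apply_ne_zero_iff.2 ⟨q, hq⟩
  rw [blockExp_sortBlocks, ← hp, ← hq, ← blockVar_of_lt hab, ← blockVar_of_lt hcd,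
    blockExp_sub_single_sub_single _ hpq, blockExp_sub_single_sub_single _ hpq]
  refine sum_congr rfl fun k hk => ?_
  obtain ⟨hkq, hkp⟩ : k ≠ q ∧ k ≠ p := by simpa using hk
  obtain ⟨h0, h1⟩ := apply_eq_of_support_subset hπ hkp hkq
  rw [blockVar_mul_of_apply_eq h0 h1]

theorem pderiv_pderiv_genPf_eq_sign_smul (K : Type) [Field K] {π : Perm (Fin (2 * n))}
    {a b c d a' b' c' d' : Fin (2 * n)} (hab : a < b) (hcd : c < d) (ha'b' : a' < b')
    (hc'd' : c' < d') (hac : a ≠ c) (hπ : π.support ⊆ {a, b, c, d})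
    (ha : π a = a') (hb : π b = b') (hc : π c = c') (hd : π d = d') :
    pderiv ⟨(a, b), hab⟩ (pderiv ⟨(c, d), hcd⟩ (genPf n K)) =
      (sign π : ℤ) • pderiv ⟨(a', b'), ha'b'⟩ (pderiv ⟨(c', d'), hc'd'⟩ (genPf n K)) := by
  have hπ' : π⁻¹.support ⊆ {a', b', c', d'} := by
    simpa [support_inv, Finset.image_insert, ha, hb, hc, hd] using support_subset_image hπ
  have ha'c' : a' ≠ c' := ha ▸ hc ▸ π.injective.ne hac
  have forth := fun σ => sortBlocks_mul_mem_and_blockExp_sub_eq (σ := σ)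
    hab hcd ha'b' hc'd' hac hπ ha hb hc hd
  have back := fun σ => sortBlocks_mul_mem_and_blockExp_sub_eq (σ := σ) (π := π⁻¹)
    ha'b' hc'd' hab hcd ha'c' hπ' (by simp [← ha]) (by simp [← hb]) (by simp [← hc])
    (by simp [← hd])
  rw [pderiv_pderiv_genPf K fun h => hac (congrArg (·.1.1) h),
    pderiv_pderiv_genPf K fun h => ha'c' (congrArg (·.1.1) h), Finset.smul_sum]
  refine sum_nbij' (fun σ => sortBlocks (π * σ)) (fun σ => sortBlocks (π⁻¹ * σ))
    (fun σ hσ => (forth σ hσ).1) (fun σ hσ => (back σ hσ).1)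
    (fun σ hσ => sortBlocks_inv_mul_sortBlocks (mem_filter.1 hσ).1 π)
    (fun σ hσ => by simpa using sortBlocks_inv_mul_sortBlocks (mem_filter.1 hσ).1 π⁻¹)
    fun σ hσ => ?_
  rw [(forth σ hσ).2, sign_sortBlocks, smul_smul, map_mul, Units.val_mul, ← mul_assoc,
    ← Units.val_mul, Int.units_mul_self, Units.val_one, one_mul]

end Pfaffian

/-- for indices `i₁ < i₂ < i₃ < i₄`, each of the three binomial
operators `y_{i₁i₂}y_{i₃i₄} + y_{i₁i₃}y_{i₂i₄}`,
`y_{i₁i₂}y_{i₃i₄} − y_{i₁i₄}y_{i₂i₃}` and `y_{i₁i₃}y_{i₂i₄} + y_{i₁i₄}y_{i₂i₃}`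
annihilates the Pfaffian of the generic skew-symmetric matrix. -/
theorem binomials_annihilate_pfaffian (K : Type) [Field K] (n : ℕ)
    (i₁ i₂ i₃ i₄ : Fin (2 * n)) (h12 : i₁ < i₂) (h23 : i₂ < i₃) (h34 : i₃ < i₄) :
    (pderiv (⟨(i₁, i₂), h12⟩ : SkVar n) (pderiv ⟨(i₃, i₄), h34⟩ (genPf n K)) +
        pderiv (⟨(i₁, i₃), h12.trans h23⟩ : SkVar n)
          (pderiv ⟨(i₂, i₄), h23.trans h34⟩ (genPf n K)) = 0) ∧
      (pderiv (⟨(i₁, i₂), h12⟩ : SkVar n) (pderiv ⟨(i₃, i₄), h34⟩ (genPf n K)) -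
        pderiv (⟨(i₁, i₄), (h12.trans h23).trans h34⟩ : SkVar n)
          (pderiv ⟨(i₂, i₃), h23⟩ (genPf n K)) = 0) ∧
      (pderiv (⟨(i₁, i₃), h12.trans h23⟩ : SkVar n)
          (pderiv ⟨(i₂, i₄), h23.trans h34⟩ (genPf n K)) +
        pderiv (⟨(i₁, i₄), (h12.trans h23).trans h34⟩ : SkVar n)
          (pderiv ⟨(i₂, i₃), h23⟩ (genPf n K)) = 0) := by
  have h13 := h12.trans h23
  have h24 := h23.trans h34
  have h14 := h13.trans h34
  open Equiv Equiv.Perm in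
  have e₁ := Pfaffian.pderiv_pderiv_genPf_eq_sign_smul K (π := swap i₂ i₃) h12 h34 h13 h24
    h13.ne (by simp [support_swap h23.ne, Finset.insert_subset_iff])
    (swap_apply_of_ne_of_ne h12.ne h13.ne) (swap_apply_left _ _) (swap_apply_right _ _)
    (swap_apply_of_ne_of_ne h24.ne' h34.ne')
  open Equiv Equiv.Perm in
  have e₂ := Pfaffian.pderiv_pderiv_genPf_eq_sign_smul K (π := swap i₃ i₄) h13 h24 h14 h23
    h12.ne (by simp [support_swap h34.ne, Finset.insert_subset_iff])
    (swap_apply_of_ne_of_ne h13.ne h14.ne) (swap_apply_left _ _)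
    (swap_apply_of_ne_of_ne h23.ne h24.ne) (swap_apply_right _ _)
  rw [Equiv.Perm.sign_swap h23.ne, Units.val_neg, Units.val_one, neg_one_smul] at e₁
  rw [Equiv.Perm.sign_swap h34.ne, Units.val_neg, Units.val_one, neg_one_smul] at e₂
  exact ⟨by linear_combination e₁, by linear_combination e₁ - e₂, by linear_combination e₂⟩
end

section
/- Let Y = (y_{ij}) be the 2n×2n skew-symmetric matrix of dual variables. Any monomial in the y_{ij} which is either the square of a variable, or a product of two variables lying in the same row (equivalently sharing an index), annihilates Pf(X) under differentiation. -/
open MvPolynomial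

lemma prod_X_eq_monomial {n : ℕ} {K : Type} [Field K] (v : Fin n → SkVar n)
    (t : Finset (Fin n)) :
    (∏ i ∈ t, (X (v i) : MvPolynomial (SkVar n) K)) =
      monomial (∑ i ∈ t, Finsupp.single (v i) 1) 1 := by
  classical
  induction t using Finset.induction with
  | empty => simp
  | @insert a s ha ih =>
      rw [Finset.prod_insert ha, Finset.sum_insert ha, ih, monomial_single_add, pow_one]

lemma pderiv_pderiv_monomial_zero {σ : Type} [DecidableEq σ] {K : Type} [CommRing K]
    (p q : σ) (s : σ →₀ ℕ) (a : K)
    (h : s q = 0 ∨ ((s - Finsupp.single q 1 : σ →₀ ℕ)) p = 0) :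
    pderiv p (pderiv q (monomial s a)) = 0 := by
  rw [pderiv_monomial, pderiv_monomial]
  rcases h with h | h <;> simp [h]

/-- any degree-2 monomial in the dual variables which is the
square of a variable, or the product of two variables sharing a row/column
index (i.e. `{i,j} ∩ {k,l} ≠ ∅`), annihilates the Pfaffian of the generic
skew-symmetric matrix. -/
theorem unacceptable_annihilates_pfaffian (K : Type) [Field K] (n : ℕ)
    (p q : SkVar n)
    (hshare : p.1.1 = q.1.1 ∨ p.1.1 = q.1.2 ∨ p.1.2 = q.1.1 ∨ p.1.2 = q.1.2) :
    pderiv p (pderiv q (genPf n K)) = 0 := by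
  classical
  unfold genPf pfaffOf
  rw [map_sum, map_sum]
  refine Finset.sum_eq_zero fun σ hσ => ?_
  rw [map_zsmul, map_zsmul]
  have h1 := ((@Finset.mem_filter _ _ (Classical.decPred _) Finset.univ σ).mp hσ).2.1
  set v : Fin n → SkVar n := fun i => ⟨(σ (pos0 i), σ (pos1 i)), h1 i⟩ with hv
  have hinj : Function.Injective v := by
    intro i j hij
    have : σ (pos0 i) = σ (pos0 j) := congrArg (fun x => x.1.1) hij
    have := σ.injective this
    have : (pos0 i).val = (pos0 j).val := congrArg Fin.val this
    simp only [pos0] at this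
    exact Fin.ext (by omega)
  have hprod : (∏ i : Fin n, skewEntry n K (σ (pos0 i)) (σ (pos1 i))) =
      ∏ i : Fin n, (X (v i) : MvPolynomial (SkVar n) K) := by
    refine Finset.prod_congr rfl fun i _ => ?_
    simp [skewEntry, h1 i, hv]
  rw [hprod, prod_X_eq_monomial]
  set s : SkVar n →₀ ℕ := ∑ i : Fin n, Finsupp.single (v i) 1 with hs
  have hsapp : ∀ r : SkVar n, s r = ∑ i : Fin n, if v i = r then 1 else 0 := by
    intro r
    rw [hs, Finsupp.finset_sum_apply]
    exact Finset.sum_congr rfl fun i _ => Finsupp.single_apply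
  have hsmem : ∀ r : SkVar n, s r ≠ 0 → ∃ i, v i = r := by
    intro r hr
    by_contra hc
    push_neg at hc
    exact hr (by rw [hsapp]; exact Finset.sum_eq_zero fun i _ => if_neg (hc i))
  have hsle : ∀ r : SkVar n, s r ≤ 1 := by
    intro r
    rw [hsapp]
    by_cases he : ∃ i, v i = r
    · obtain ⟨i₀, hi₀⟩ := he
      rw [Finset.sum_eq_single i₀ (fun j _ hj => if_neg (fun h => hj (hinj (h.trans hi₀.symm))))
        (fun h => absurd (Finset.mem_univ i₀) h)]
      split <;> omega
    · push_neg at he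
      rw [Finset.sum_eq_zero fun i _ => if_neg (he i)]
      omega
  have key : s q = 0 ∨ ((s - Finsupp.single q 1 : SkVar n →₀ ℕ)) p = 0 := by
    by_cases hsq : s q = 0
    · exact Or.inl hsq
    right
    rw [Finsupp.tsub_apply]
    by_cases hpq : p = q
    · subst hpq
      rw [Finsupp.single_eq_same]
      have := hsle p
      omega
    · suffices hsp : s p = 0 by omega
      by_contra hsp
      obtain ⟨i, hi⟩ := hsmem p hsp
      obtain ⟨j, hj⟩ := hsmem q hsq
      have hij : i ≠ j := fun h => hpq (hi ▸ hj ▸ h ▸ rfl)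
      have hp1 : p.1.1 = σ (pos0 i) := by rw [← hi]
      have hp2 : p.1.2 = σ (pos1 i) := by rw [← hi]
      have hq1 : q.1.1 = σ (pos0 j) := by rw [← hj]
      have hq2 : q.1.2 = σ (pos1 j) := by rw [← hj]
      have hvne : (pos0 i).val ≠ (pos0 j).val ∧ (pos0 i).val ≠ (pos1 j).val ∧
          (pos1 i).val ≠ (pos0 j).val ∧ (pos1 i).val ≠ (pos1 j).val := by
        have : i.val ≠ j.val := fun h => hij (Fin.ext h)
        simp only [pos0, pos1]
        omega
      rcases hshare with h | h | h | h
      · rw [hp1, hq1] at h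
        exact hvne.1 (congrArg Fin.val (σ.injective h))
      · rw [hp1, hq2] at h
        exact hvne.2.1 (congrArg Fin.val (σ.injective h))
      · rw [hp2, hq1] at h
        exact hvne.2.2.1 (congrArg Fin.val (σ.injective h))
      · rw [hp2, hq2] at h
        exact hvne.2.2.2 (congrArg Fin.val (σ.injective h))
  rw [pderiv_pderiv_monomial_zero p q s 1 key, smul_zero]
end
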